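/- An atomic amalgam of Kleene lattices is a sharply paraorthomodular poset if and only if it contains no atomic loop of order 3. -/

import Mathlib

/-- A pasted family of finite Kleene lattices over a common carrier `K`,
indexed by `ι`.  Each block `blk i` carries a bounded distributive lattice
structure `(le i, inf i, sup i, bot, top)` with an antitone involution `compl`
which is paraorthomodular and regular (i.e. each block is a Kleene lattice)
and has at least 6 elements.  Any two distinct blocks intersect either in
`{bot, top}` or in a common atomic Kleene subalgebra of at most 4 elements on
which the operations coincide and whose elements other than `bot`, `top` are
simultaneously atoms or simultaneously coatoms of both blocks. -/
structure PastedFamily (K : Type*) (ι : Type*) where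
  blk : ι → Set K
  cover : ∀ x : K, ∃ i, x ∈ blk i
  le : ι → K → K → Prop
  inf : ι → K → K → K
  sup : ι → K → K → K
  compl : K → K
  bot : K
  top : K
  bot_mem : ∀ i, bot ∈ blk i
  top_mem : ∀ i, top ∈ blk i
  finite : ∀ i, (blk i).Finite
  card6 : ∀ i, 6 ≤ (blk i).ncard
  le_refl : ∀ i x, x ∈ blk i → le i x x
  le_antisymm' : ∀ i x y, le i x y → le i y x → x = y
  le_trans' : ∀ i x y z, le i x y → le i y z → le i x z
  bot_le : ∀ i x, x ∈ blk i → le i bot x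
  le_top : ∀ i x, x ∈ blk i → le i x top
  inf_mem : ∀ i x y, x ∈ blk i → y ∈ blk i → inf i x y ∈ blk i
  sup_mem : ∀ i x y, x ∈ blk i → y ∈ blk i → sup i x y ∈ blk i
  inf_le_left : ∀ i x y, x ∈ blk i → y ∈ blk i → le i (inf i x y) x
  inf_le_right : ∀ i x y, x ∈ blk i → y ∈ blk i → le i (inf i x y) y
  le_inf : ∀ i x y z, x ∈ blk i → y ∈ blk i → z ∈ blk i →
    le i z x → le i z y → le i z (inf i x y)
  le_sup_left : ∀ i x y, x ∈ blk i → y ∈ blk i → le i x (sup i x y)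
  le_sup_right : ∀ i x y, x ∈ blk i → y ∈ blk i → le i y (sup i x y)
  sup_le : ∀ i x y z, x ∈ blk i → y ∈ blk i → z ∈ blk i →
    le i x z → le i y z → le i (sup i x y) z
  distrib : ∀ i x y z, x ∈ blk i → y ∈ blk i → z ∈ blk i →
    inf i x (sup i y z) = sup i (inf i x y) (inf i x z)
  compl_mem : ∀ i x, x ∈ blk i → compl x ∈ blk i
  compl_antitone : ∀ i x y, x ∈ blk i → y ∈ blk i → le i x y →
    le i (compl y) (compl x)
  compl_invol : ∀ x, compl (compl x) = x
  /-- Each block is paraorthomodular. -/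
  blockParaOM : ∀ i x y, x ∈ blk i → y ∈ blk i → le i x y →
    inf i (compl x) y = bot → x = y
  /-- Each block is regular (Kleene condition). -/
  regular : ∀ i x y, x ∈ blk i → y ∈ blk i →
    le i (inf i x (compl x)) (sup i y (compl y))
  /-- The block orders agree on intersections of blocks. -/
  le_compat : ∀ i j x y, x ∈ blk i → y ∈ blk i → x ∈ blk j → y ∈ blk j →
    le i x y → le j x y
  /-- Pasting condition on the intersection of two distinct blocks. -/
  inter : ∀ i j, i ≠ j → blk i ∩ blk j = {bot, top} ∨
    ((blk i ∩ blk j).ncard ≤ 4 ∧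
     bot ∈ blk i ∩ blk j ∧ top ∈ blk i ∩ blk j ∧
     (∀ x ∈ blk i ∩ blk j, compl x ∈ blk i ∩ blk j) ∧
     (∀ x y, x ∈ blk i ∩ blk j → y ∈ blk i ∩ blk j →
       inf i x y = inf j x y ∧ inf i x y ∈ blk i ∩ blk j ∧
       sup i x y = sup j x y ∧ sup i x y ∈ blk i ∩ blk j) ∧
     (∀ x ∈ blk i ∩ blk j, x ≠ bot → x ≠ top →
       ((x ≠ bot ∧ ∀ z ∈ blk i, le i z x → z = bot ∨ z = x) ∧
        (x ≠ bot ∧ ∀ z ∈ blk j, le j z x → z = bot ∨ z = x)) ∨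
       ((x ≠ top ∧ ∀ z ∈ blk i, le i x z → z = top ∨ z = x) ∧
        (x ≠ top ∧ ∀ z ∈ blk j, le j x z → z = top ∨ z = x))))

namespace PastedFamily

variable {K ι : Type*} (A : PastedFamily K ι)

/-- The order of the atomic amalgam: `x ≤ y` iff `x ≤ y` in some block. -/
def gle (x y : K) : Prop := ∃ i, x ∈ A.blk i ∧ y ∈ A.blk i ∧ A.le i x y

/-- `s` is the least upper bound of `x` and `y` in the amalgam. -/
def IsLubA (x y s : K) : Prop :=
  A.gle x s ∧ A.gle y s ∧ ∀ z, A.gle x z → A.gle y z → A.gle s z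

/-- `m` is the greatest lower bound of `x` and `y` in the amalgam. -/
def IsGlbA (x y m : K) : Prop :=
  A.gle m x ∧ A.gle m y ∧ ∀ z, A.gle z x → A.gle z y → A.gle z m

/-- Paraorthomodularity of the amalgam: `x ≤ y` and `x' ∧ y = 0`
(i.e. the lower cone `L(x', y)` is `{0}`) imply `x = y`. -/
def ParaOM : Prop := ∀ x y, A.gle x y →
  (∀ z, A.gle z (A.compl x) → A.gle z y → z = A.bot) → x = y

/-- Blocks `i, j, k` form an atomic loop of order 3: consecutive (cyclic)
intersections have exactly 4 elements and the triple intersection is `{0,1}`. -/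
def AtomicLoop3 (i j k : ι) : Prop :=
  (A.blk i ∩ A.blk j).ncard = 4 ∧ (A.blk j ∩ A.blk k).ncard = 4 ∧
  (A.blk k ∩ A.blk i).ncard = 4 ∧
  A.blk i ∩ A.blk j ∩ A.blk k = {A.bot, A.top}

/-- Blocks `i, j, k, l` form an atomic loop of order 4. -/
def AtomicLoop4 (i j k l : ι) : Prop :=
  (A.blk i ∩ A.blk j).ncard = 4 ∧ (A.blk j ∩ A.blk k).ncard = 4 ∧
  (A.blk k ∩ A.blk l).ncard = 4 ∧ (A.blk l ∩ A.blk i).ncard = 4 ∧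
  A.blk i ∩ A.blk k = {A.bot, A.top} ∧ A.blk j ∩ A.blk l = {A.bot, A.top} ∧
  A.blk i ∩ A.blk j ∩ A.blk k = {A.bot, A.top} ∧
  A.blk i ∩ A.blk j ∩ A.blk l = {A.bot, A.top} ∧
  A.blk i ∩ A.blk k ∩ A.blk l = {A.bot, A.top} ∧
  A.blk j ∩ A.blk k ∩ A.blk l = {A.bot, A.top}

end PastedFamily


/-!
Paraorthomodularity is inherited from the blocks: for `x ≤ y` in a block, the block meet `x' ∧ y`
lies in the lower cone of `x'` and `y`. For orthogonality, let `x ≤ y'` in block `i`; the block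
join `x ∨ y` is the only candidate for the join. An upper bound `z` outside block `i` reaches `x`
and `y` through blocks `m` and `n`. If `m = n`, the pasting makes `x ∨ y` the same in blocks `i`
and `m`, hence below `z`. Otherwise the blocks `i, m, n` pairwise share the
nontrivial elements `x`, `z`, `y`, so each pairwise intersection is `{0, 1, a, a'}`, and as
`z ∉ i` they form an atomic loop of order 3.

Conversely, in a loop `i, j, k` choose atoms `p, q, r` shared by consecutive blocks. Distinct atoms
of a Kleene block are orthogonal, so `p` and `q` have a join `s`, and `s` lies below `r'`. An
element of two blocks that is not an atom of one of them is a coatom of every block containing it;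
this forces `s` to be the join `t` of `p, q` in block `j` (which is not `1` as blocks have at
least six elements), and then `t ≤ r'` forces `t = r'`, although `r'` is not in block `j`.
-/

namespace PastedFamily

variable {K ι : Type*} (A : PastedFamily K ι) {i j k : ι} {a b x y z : K}

lemma compl_mem_iff : A.compl x ∈ A.blk i ↔ x ∈ A.blk i :=
  ⟨fun h => A.compl_invol x ▸ A.compl_mem i _ h, A.compl_mem i x⟩

lemma le_compl_comm (hx : x ∈ A.blk i) (hy : y ∈ A.blk i) (h : A.le i x (A.compl y)) :
    A.le i y (A.compl x) := by
  simpa only [A.compl_invol] using A.compl_antitone i x _ hx (A.compl_mem i y hy) h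

lemma eq_bot_of_le_bot (hx : x ∈ A.blk i) (h : A.le i x A.bot) : x = A.bot :=
  A.le_antisymm' i _ _ h (A.bot_le i x hx)

lemma eq_top_of_top_le (hx : x ∈ A.blk i) (h : A.le i A.top x) : x = A.top :=
  A.le_antisymm' i _ _ (A.le_top i x hx) h

lemma compl_top : A.compl A.top = A.bot := by
  obtain ⟨i, -⟩ := A.cover A.bot
  have hb := A.compl_mem i _ (A.bot_mem i)
  refine A.eq_bot_of_le_bot (A.compl_mem i _ (A.top_mem i)) ?_
  simpa only [A.compl_invol] using A.compl_antitone i _ _ hb (A.top_mem i) (A.le_top i _ hb)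

lemma compl_bot : A.compl A.bot = A.top := by
  rw [← A.compl_top, A.compl_invol]

lemma compl_eq_bot : A.compl x = A.bot ↔ x = A.top :=
  ⟨fun h => by rw [← A.compl_invol x, h, A.compl_bot], fun h => h ▸ A.compl_top⟩

lemma compl_eq_top : A.compl x = A.top ↔ x = A.bot :=
  ⟨fun h => by rw [← A.compl_invol x, h, A.compl_top], fun h => h ▸ A.compl_bot⟩

lemma le_of_gle (hx : x ∈ A.blk i) (hy : y ∈ A.blk i) (h : A.gle x y) : A.le i x y := by
  obtain ⟨j, hxj, hyj, h⟩ := h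
  exact A.le_compat j i x y hxj hyj hx hy h

lemma gle_antisymm (h₁ : A.gle x y) (h₂ : A.gle y x) : x = y := by
  obtain ⟨i, hx, hy, h⟩ := h₁
  exact A.le_antisymm' i x y h (A.le_of_gle hy hx h₂)

lemma not_subset_of_card_lt {S : Finset K} (hS : S.card < 6) : ¬ A.blk i ⊆ S := fun h =>
  (A.card6 i).not_gt ((Set.ncard_le_ncard h S.finite_toSet).trans_lt (by rwa [Set.ncard_coe_finset]))

lemma bot_ne_top : A.bot ≠ A.top := by
  classical
  intro h
  obtain ⟨i, -⟩ := A.cover A.bot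
  refine A.not_subset_of_card_lt (i := i) (S := {A.bot}) (by simp) fun y hy => ?_
  simp [A.eq_bot_of_le_bot hy (h ▸ A.le_top i y hy)]

lemma inf_eq_left (hx : x ∈ A.blk i) (hy : y ∈ A.blk i) (h : A.le i x y) : A.inf i x y = x :=
  A.le_antisymm' i _ _ (A.inf_le_left i x y hx hy) (A.le_inf i x y x hx hy hx (A.le_refl i x hx) h)

lemma sup_eq_right (hx : x ∈ A.blk i) (hy : y ∈ A.blk i) (h : A.le i x y) : A.sup i x y = y :=
  A.le_antisymm' i _ _ (A.sup_le i x y y hx hy hy h (A.le_refl i y hy)) (A.le_sup_right i x y hx hy)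

lemma sup_bot_left (hy : y ∈ A.blk i) : A.sup i A.bot y = y :=
  A.sup_eq_right (A.bot_mem i) hy (A.bot_le i y hy)

lemma sup_bot_right (hx : x ∈ A.blk i) : A.sup i x A.bot = x :=
  A.le_antisymm' i _ _ (A.sup_le i x _ x hx (A.bot_mem i) hx (A.le_refl i x hx) (A.bot_le i x hx))
    (A.le_sup_left i x _ hx (A.bot_mem i))

lemma inf_comm (hx : x ∈ A.blk i) (hy : y ∈ A.blk i) : A.inf i x y = A.inf i y x :=
  A.le_antisymm' i _ _
    (A.le_inf i y x _ hy hx (A.inf_mem i x y hx hy) (A.inf_le_right i x y hx hy)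
      (A.inf_le_left i x y hx hy))
    (A.le_inf i x y _ hx hy (A.inf_mem i y x hy hx) (A.inf_le_right i y x hy hx)
      (A.inf_le_left i y x hy hx))

lemma le_of_le_sup_of_inf_eq_bot (ha : a ∈ A.blk i) (hb : b ∈ A.blk i) (hx : x ∈ A.blk i)
    (hle : A.le i a (A.sup i b x)) (hab : A.inf i a b = A.bot) : A.le i a x := by
  have h : A.inf i a x = a := calc
    A.inf i a x = A.sup i (A.inf i a b) (A.inf i a x) := by
      rw [hab, A.sup_bot_left (A.inf_mem i a x ha hx)]
    _ = A.inf i a (A.sup i b x) := (A.distrib i a b x ha hb hx).symm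
    _ = a := A.inf_eq_left ha (A.sup_mem i b x hb hx) hle
  exact h ▸ A.inf_le_right i a x ha hx

lemma le_compl_of_le_compl_self (ha : a ∈ A.blk i) (hb : b ∈ A.blk i)
    (hbb : A.le i b (A.compl b)) (hba : A.inf i b a = A.bot) : A.le i b (A.compl a) := by
  have hreg := A.regular i b a hb ha
  rw [A.inf_eq_left hb (A.compl_mem i b hb) hbb] at hreg
  exact A.le_of_le_sup_of_inf_eq_bot hb ha (A.compl_mem i a ha) hreg hba

def IsAtomIn (i : ι) (a : K) : Prop :=
  a ≠ A.bot ∧ ∀ z ∈ A.blk i, A.le i z a → z = A.bot ∨ z = a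

def IsCoatomIn (i : ι) (a : K) : Prop :=
  a ≠ A.top ∧ ∀ z ∈ A.blk i, A.le i a z → z = A.top ∨ z = a

variable {A}

lemma IsAtomIn.inf_eq_bot_or_eq (ha : A.IsAtomIn i a) (hai : a ∈ A.blk i) (hy : y ∈ A.blk i) :
    A.inf i a y = A.bot ∨ A.inf i a y = a :=
  ha.2 _ (A.inf_mem i a y hai hy) (A.inf_le_left i a y hai hy)

lemma IsAtomIn.ne_top (ha : A.IsAtomIn i a) : a ≠ A.top := by
  classical
  rintro rfl
  refine A.not_subset_of_card_lt (i := i) (S := {A.bot, A.top})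
    (Finset.card_le_two.trans_lt (by norm_num)) fun z hz => ?_
  simpa using ha.2 z hz (A.le_top i z hz)

lemma IsCoatomIn.compl (hc : A.IsCoatomIn i a) (hai : a ∈ A.blk i) :
    A.IsAtomIn i (A.compl a) := by
  refine ⟨fun h => hc.1 (A.compl_eq_bot.1 h), fun z hz hza => ?_⟩
  rcases hc.2 _ (A.compl_mem i z hz) (A.le_compl_comm hz hai hza) with h | h
  · exact Or.inl (A.compl_eq_top.1 h)
  · exact Or.inr (by rw [← h, A.compl_invol])

lemma IsAtomIn.compl_ne_self (ha : A.IsAtomIn i a) (hai : a ∈ A.blk i) : A.compl a ≠ a := by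
  classical
  intro hfix
  have haa : A.le i a (A.compl a) := by rw [hfix]; exact A.le_refl i a hai
  -- If `a ∧ y = 0`, the Kleene condition gives `y ≤ a' = a`, so `y = a`.
  have hle : ∀ y ∈ A.blk i, y ≠ A.bot → A.le i a y := by
    intro y hy hy0
    rcases ha.inf_eq_bot_or_eq hai hy with h | h
    · have hya : A.le i y a := by
        simpa only [hfix] using A.le_compl_comm hai hy (A.le_compl_of_le_compl_self hy hai haa h)
      obtain rfl : y = a := (ha.2 y hy hya).resolve_left hy0
      exact A.le_refl i y hy
    · exact h ▸ A.inf_le_right i a y hai hy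
  refine A.not_subset_of_card_lt (i := i) (S := {A.bot, a, A.top})
    (Finset.card_le_three.trans_lt (by norm_num)) fun y hy => ?_
  by_cases hy0 : y = A.bot
  · simp [hy0]
  by_cases hy1 : y = A.top
  · simp [hy1]
  have hya : A.le i y a := by
    simpa only [hfix] using
      A.le_compl_comm hai hy (hle _ (A.compl_mem i y hy) (mt A.compl_eq_bot.1 hy1))
  simp [(ha.2 y hy hya).resolve_left hy0]

lemma IsAtomIn.le_compl_of_ne (ha : A.IsAtomIn i a) (hb : A.IsAtomIn i b) (hai : a ∈ A.blk i)
    (hbi : b ∈ A.blk i) (hab : a ≠ b) : A.le i a (A.compl b) := by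
  have hb' := A.compl_mem i b hbi
  have hnle : ¬ A.le i a b := fun h => hab ((hb.2 a hai h).resolve_left ha.1)
  rcases ha.inf_eq_bot_or_eq hai hb' with h | h
  swap
  · exact h ▸ A.inf_le_right i a _ hai hb'
  exfalso
  have hinf : A.inf i a b = A.bot :=
    (ha.inf_eq_bot_or_eq hai hbi).resolve_right fun h => hnle (h ▸ A.inf_le_right i a b hai hbi)
  rcases hb.inf_eq_bot_or_eq hbi hb' with hbb | hbb
  · have hc : A.inf i (A.compl b) (A.sup i a b) = A.bot := by
      rw [A.distrib i _ a b hb' hai hbi, A.inf_comm hb' hai, h, A.inf_comm hb' hbi, hbb,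
        A.sup_bot_left (A.bot_mem i)]
    have heq := A.blockParaOM i b _ hbi (A.sup_mem i a b hai hbi) (A.le_sup_right i a b hai hbi) hc
    exact hnle (heq ▸ A.le_sup_left i a b hai hbi)
  · have hbb' : A.le i b (A.compl b) := by
      simpa only [hbb] using A.inf_le_right i b _ hbi hb'
    have hba : A.le i b (A.compl a) :=
      A.le_compl_of_le_compl_self hai hbi hbb' (by rw [A.inf_comm hbi hai, hinf])
    exact ha.1 ((A.inf_eq_left hai hb' (A.le_compl_comm hbi hai hba)).symm.trans h)

lemma IsAtomIn.sup_ne_top (ha : A.IsAtomIn i a) (hb : A.IsAtomIn i b) (hai : a ∈ A.blk i)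
    (hbi : b ∈ A.blk i) : A.sup i a b ≠ A.top := by
  classical
  intro htop
  refine A.not_subset_of_card_lt (i := i) (S := {A.bot, a, b, A.top})
    (Finset.card_le_four.trans_lt (by norm_num)) fun y hy => ?_
  have hy' : y = A.sup i (A.inf i a y) (A.inf i b y) := by
    rw [A.inf_comm hai hy, A.inf_comm hbi hy, ← A.distrib i y a b hy hai hbi, htop,
      A.inf_eq_left hy (A.top_mem i) (A.le_top i y hy)]
  rcases ha.inf_eq_bot_or_eq hai hy with h₁ | h₁ <;>
    rcases hb.inf_eq_bot_or_eq hbi hy with h₂ | h₂ <;>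
    rw [h₁, h₂] at hy' <;>
    simp [hy', htop, A.sup_bot_left, A.sup_bot_right, A.bot_mem, hai, hbi]

variable (A)

lemma inter_ne_pair (hx : x ∈ A.blk i ∩ A.blk j) (h0 : x ≠ A.bot) (h1 : x ≠ A.top) :
    A.blk i ∩ A.blk j ≠ {A.bot, A.top} := by
  intro h
  rw [h] at hx
  rcases hx with h' | h'
  exacts [h0 h', h1 h']

lemma ncard_inter_le_four (hij : i ≠ j) (hx : x ∈ A.blk i ∩ A.blk j) (h0 : x ≠ A.bot)
    (h1 : x ≠ A.top) : (A.blk i ∩ A.blk j).ncard ≤ 4 :=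
  ((A.inter i j hij).resolve_left (A.inter_ne_pair hx h0 h1)).1

lemma sup_eq_sup_of_mem_inter (hij : i ≠ j) (hx : x ∈ A.blk i ∩ A.blk j) (h0 : x ≠ A.bot)
    (h1 : x ≠ A.top) (ha : a ∈ A.blk i ∩ A.blk j) (hb : b ∈ A.blk i ∩ A.blk j) :
    A.sup i a b = A.sup j a b :=
  (((A.inter i j hij).resolve_left (A.inter_ne_pair hx h0 h1)).2.2.2.2.1 a b ha hb).2.2.1

lemma isAtomIn_or_isCoatomIn (hij : i ≠ j) (hx : x ∈ A.blk i ∩ A.blk j) (h0 : x ≠ A.bot)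
    (h1 : x ≠ A.top) :
    (A.IsAtomIn i x ∧ A.IsAtomIn j x) ∨ (A.IsCoatomIn i x ∧ A.IsCoatomIn j x) :=
  ((A.inter i j hij).resolve_left (A.inter_ne_pair hx h0 h1)).2.2.2.2.2 x hx h0 h1

lemma compl_ne_self_of_mem_inter (hij : i ≠ j) (hx : x ∈ A.blk i ∩ A.blk j) (h0 : x ≠ A.bot)
    (h1 : x ≠ A.top) : A.compl x ≠ x := by
  rcases A.isAtomIn_or_isCoatomIn hij hx h0 h1 with ⟨ha, -⟩ | ⟨hc, -⟩
  · exact ha.compl_ne_self hx.1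
  · exact fun h => (hc.compl hx.1).compl_ne_self (A.compl_mem i x hx.1) (by rw [A.compl_invol, h])

lemma ncard_bot_top_compl (h0 : x ≠ A.bot) (h1 : x ≠ A.top) (hx : A.compl x ≠ x) :
    ({A.bot, A.top, x, A.compl x} : Set K).ncard = 4 :=
  Set.ncard_eq_four.2 ⟨_, _, _, _, A.bot_ne_top, h0.symm,
    fun h => h1 (A.compl_eq_bot.1 h.symm), h1.symm, fun h => h0 (A.compl_eq_top.1 h.symm),
    hx.symm, rfl⟩

lemma inter_eq_of_mem (hij : i ≠ j) (hx : x ∈ A.blk i ∩ A.blk j) (h0 : x ≠ A.bot)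
    (h1 : x ≠ A.top) : A.blk i ∩ A.blk j = {A.bot, A.top, x, A.compl x} := by
  have hsub : ({A.bot, A.top, x, A.compl x} : Set K) ⊆ A.blk i ∩ A.blk j := by
    simp only [Set.insert_subset_iff, Set.singleton_subset_iff]
    exact ⟨⟨A.bot_mem i, A.bot_mem j⟩, ⟨A.top_mem i, A.top_mem j⟩, hx,
      ⟨A.compl_mem i x hx.1, A.compl_mem j x hx.2⟩⟩
  refine (Set.eq_of_subset_of_ncard_le hsub ?_ ((A.finite i).inter_of_left _)).symm
  rw [A.ncard_bot_top_compl h0 h1 (A.compl_ne_self_of_mem_inter hij hx h0 h1)]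
  exact A.ncard_inter_le_four hij hx h0 h1

lemma ncard_inter_eq_four (hij : i ≠ j) (hx : x ∈ A.blk i ∩ A.blk j) (h0 : x ≠ A.bot)
    (h1 : x ≠ A.top) : (A.blk i ∩ A.blk j).ncard = 4 := by
  rw [A.inter_eq_of_mem hij hx h0 h1,
    A.ncard_bot_top_compl h0 h1 (A.compl_ne_self_of_mem_inter hij hx h0 h1)]

lemma isCoatomIn_of_not_isAtomIn (hij : i ≠ j) (hx : x ∈ A.blk i ∩ A.blk j) (h0 : x ≠ A.bot)
    (h1 : x ≠ A.top) (hna : ¬ A.IsAtomIn i x) (hxk : x ∈ A.blk k) : A.IsCoatomIn k x := by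
  by_cases hki : k = i
  · subst hki
    exact ((A.isAtomIn_or_isCoatomIn hij hx h0 h1).resolve_left fun h => hna h.1).1
  · exact ((A.isAtomIn_or_isCoatomIn (Ne.symm hki) ⟨hx.1, hxk⟩ h0 h1).resolve_left
      fun h => hna h.1).2

lemma exists_isAtomIn_of_mem_inter (hij : i ≠ j) (hx : x ∈ A.blk i ∩ A.blk j) (h0 : x ≠ A.bot)
    (h1 : x ≠ A.top) : ∃ p ∈ A.blk i ∩ A.blk j, A.IsAtomIn i p ∧ A.IsAtomIn j p := by
  rcases A.isAtomIn_or_isCoatomIn hij hx h0 h1 with ha | ⟨hci, hcj⟩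
  · exact ⟨x, hx, ha⟩
  · exact ⟨A.compl x, ⟨A.compl_mem i x hx.1, A.compl_mem j x hx.2⟩, hci.compl hx.1,
      hcj.compl hx.2⟩

lemma atomicLoop3_of_mem (hij : i ≠ j) (hjk : j ≠ k) (hki : k ≠ i)
    (hx : x ∈ A.blk i ∩ A.blk j) (hx0 : x ≠ A.bot) (hx1 : x ≠ A.top)
    (hy : y ∈ A.blk j ∩ A.blk k) (hy0 : y ≠ A.bot) (hy1 : y ≠ A.top)
    (hz : z ∈ A.blk k ∩ A.blk i) (hz0 : z ≠ A.bot) (hz1 : z ≠ A.top) (hyi : y ∉ A.blk i) :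
    A.AtomicLoop3 i j k := by
  refine ⟨A.ncard_inter_eq_four hij hx hx0 hx1, A.ncard_inter_eq_four hjk hy hy0 hy1,
    A.ncard_inter_eq_four hki hz hz0 hz1, Set.Subset.antisymm ?_ ?_⟩
  · rintro w ⟨⟨hwi, hwj⟩, hwk⟩
    have hw : w ∈ A.blk j ∩ A.blk k := ⟨hwj, hwk⟩
    rw [A.inter_eq_of_mem hjk hy hy0 hy1] at hw
    rcases hw with h | h | rfl | rfl
    · exact Or.inl h
    · exact Or.inr h
    · exact absurd hwi hyi
    · exact absurd (A.compl_mem_iff.1 hwi) hyi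
  · simp only [Set.insert_subset_iff, Set.singleton_subset_iff]
    exact ⟨⟨⟨A.bot_mem i, A.bot_mem j⟩, A.bot_mem k⟩, ⟨⟨A.top_mem i, A.top_mem j⟩, A.top_mem k⟩⟩

namespace AtomicLoop3

variable {A}

lemma ne (h : A.AtomicLoop3 i j k) : i ≠ j := by
  rintro rfl
  have h4 := h.1
  rw [Set.inter_self] at h4
  have := A.card6 i
  omega

lemma rotate (h : A.AtomicLoop3 i j k) : A.AtomicLoop3 j k i :=
  ⟨h.2.1, h.2.2.1, h.1, by rw [Set.inter_comm, ← Set.inter_assoc]; exact h.2.2.2⟩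

lemma exists_isAtomIn (h : A.AtomicLoop3 i j k) :
    ∃ p, p ∈ A.blk i ∧ p ∈ A.blk j ∧ p ∉ A.blk k ∧ A.IsAtomIn i p ∧ A.IsAtomIn j p := by
  obtain ⟨x, hx, hx01⟩ := Set.exists_mem_notMem_of_ncard_lt_ncard
    (s := {A.bot, A.top}) (t := A.blk i ∩ A.blk j)
    (by rw [h.1]; exact (Set.ncard_insert_le _ _).trans_lt (by simp))
  simp only [Set.mem_insert_iff, Set.mem_singleton_iff, not_or] at hx01
  obtain ⟨p, ⟨hpi, hpj⟩, hpAi, hpAj⟩ := A.exists_isAtomIn_of_mem_inter h.ne hx hx01.1 hx01.2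
  refine ⟨p, hpi, hpj, fun hpk => ?_, hpAi, hpAj⟩
  have hp : p ∈ A.blk i ∩ A.blk j ∩ A.blk k := ⟨⟨hpi, hpj⟩, hpk⟩
  rw [h.2.2.2] at hp
  rcases hp with h' | h'
  exacts [hpAi.1 h', hpAi.ne_top h']

end AtomicLoop3

lemma paraOM : A.ParaOM := by
  rintro x y ⟨i, hx, hy, hxy⟩ hcone
  have hx' := A.compl_mem i x hx
  refine A.blockParaOM i x y hx hy hxy (hcone _ ?_ ?_)
  · exact ⟨i, A.inf_mem i _ _ hx' hy, hx', A.inf_le_left i _ _ hx' hy⟩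
  · exact ⟨i, A.inf_mem i _ _ hx' hy, hy, A.inf_le_right i _ _ hx' hy⟩

lemma isLubA_sup (hnl : ¬ ∃ i j k, A.AtomicLoop3 i j k) (hx : x ∈ A.blk i) (hy : y ∈ A.blk i)
    (hxy : A.le i x (A.compl y)) : A.IsLubA x y (A.sup i x y) := by
  have hs := A.sup_mem i x y hx hy
  refine ⟨⟨i, hx, hs, A.le_sup_left i x y hx hy⟩, ⟨i, hy, hs, A.le_sup_right i x y hx hy⟩, ?_⟩
  rintro z ⟨m, hxm, hzm, hxz⟩ ⟨n, hyn, hzn, hyz⟩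
  by_cases hzi : z ∈ A.blk i
  · exact ⟨i, hs, hzi, A.sup_le i x y z hx hy hzi (A.le_of_gle hx hzi ⟨m, hxm, hzm, hxz⟩)
      (A.le_of_gle hy hzi ⟨n, hyn, hzn, hyz⟩)⟩
  rcases eq_or_ne x A.bot with rfl | hx0
  · rw [A.sup_bot_left hy]
    exact ⟨n, hyn, hzn, hyz⟩
  rcases eq_or_ne y A.bot with rfl | hy0
  · rw [A.sup_bot_right hx]
    exact ⟨m, hxm, hzm, hxz⟩
  have hx1 : x ≠ A.top := fun h =>
    hy0 (A.compl_eq_top.1 (A.eq_top_of_top_le (A.compl_mem i y hy) (h ▸ hxy)))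
  have hy1 : y ≠ A.top := fun h =>
    hx0 (A.eq_bot_of_le_bot hx (by rwa [h, A.compl_top] at hxy))
  have hz0 : z ≠ A.bot := fun h => hzi (h ▸ A.bot_mem i)
  have hz1 : z ≠ A.top := fun h => hzi (h ▸ A.top_mem i)
  have hmi : m ≠ i := fun h => hzi (h ▸ hzm)
  have hni : n ≠ i := fun h => hzi (h ▸ hzn)
  rcases eq_or_ne m n with rfl | hmn
  · rw [A.sup_eq_sup_of_mem_inter hmi.symm ⟨hx, hxm⟩ hx0 hx1 ⟨hx, hxm⟩ ⟨hy, hyn⟩]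
    exact ⟨m, A.sup_mem m x y hxm hyn, hzm, A.sup_le m x y z hxm hyn hzm hxz hyz⟩
  · exact absurd ⟨i, m, n, A.atomicLoop3_of_mem hmi.symm hmn hni ⟨hx, hxm⟩ hx0 hx1
      ⟨hzm, hzn⟩ hz0 hz1 ⟨hyn, hy⟩ hy0 hy1 hzi⟩ hnl

lemma eq_sup_of_isLubA (ha : a ∈ A.blk j) (hb : b ∈ A.blk j) (ha0 : a ≠ A.bot)
    (ht : A.sup j a b ≠ A.top) (hs : A.IsLubA a b x) : x = A.sup j a b := by
  obtain ⟨⟨u, hau, hxu, hax⟩, ⟨u', hbu', hxu', hbx⟩, hleast⟩ := hs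
  have htj := A.sup_mem j a b ha hb
  have hat := A.le_sup_left j a b ha hb
  obtain ⟨v, hxv, htv, hxt⟩ := hleast _ ⟨j, ha, htj, hat⟩ ⟨j, hb, htj, A.le_sup_right j a b ha hb⟩
  suffices hxj : x ∈ A.blk j from A.gle_antisymm ⟨v, hxv, htv, hxt⟩
    ⟨j, htj, hxj, A.sup_le j a b x ha hb hxj (A.le_of_gle ha hxj ⟨u, hau, hxu, hax⟩)
      (A.le_of_gle hb hxj ⟨u', hbu', hxu', hbx⟩)⟩
  by_contra hxj
  have huj : u ≠ j := fun h => hxj (h ▸ hxu)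
  rcases eq_or_ne u u' with rfl | huu'
  · have ha1 : a ≠ A.top := fun h => ht (A.eq_top_of_top_le htj (h ▸ hat))
    have hsup := A.sup_eq_sup_of_mem_inter huj ⟨hau, ha⟩ ha0 ha1 ⟨hau, ha⟩ ⟨hbu', hb⟩
    have htx : A.gle (A.sup j a b) x := by
      rw [← hsup]
      exact ⟨u, A.sup_mem u a b hau hbu', hxu, A.sup_le u a b x hau hbu' hxu hax hbx⟩
    exact hxj (A.gle_antisymm ⟨v, hxv, htv, hxt⟩ htx ▸ htj)
  · have hx0 : x ≠ A.bot := fun h => ha0 (A.eq_bot_of_le_bot hau (h ▸ hax))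
    have hx1 : x ≠ A.top := fun h => ht (A.eq_top_of_top_le htv (h ▸ hxt))
    have hna : ¬ A.IsAtomIn u x := fun h => hxj ((h.2 a hau hax).resolve_left ha0 ▸ ha)
    rcases (A.isCoatomIn_of_not_isAtomIn huu' ⟨hxu, hxu'⟩ hx0 hx1 hna hxv).2 _ htv hxt with h | h
    · exact ht h
    · exact hxj (h ▸ htj)

lemma not_atomicLoop3_of_orthogonal
    (hOrth : ∀ x y : K, A.gle x (A.compl y) → ∃ s, A.IsLubA x y s) : ¬ A.AtomicLoop3 i j k := by
  intro hL
  obtain ⟨p, hpi, hpj, hpk, hpAi, hpAj⟩ := hL.exists_isAtomIn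
  obtain ⟨q, hqj, hqk, hqi, hqAj, hqAk⟩ := hL.rotate.exists_isAtomIn
  obtain ⟨r, hrk, hri, hrj, hrAk, hrAi⟩ := hL.rotate.rotate.exists_isAtomIn
  have hpq : p ≠ q := fun h => hpk (h ▸ hqk)
  have htj := A.sup_mem j p q hpj hqj
  have hpt := A.le_sup_left j p q hpj hqj
  have ht1 := hpAj.sup_ne_top hqAj hpj hqj
  obtain ⟨s, hs⟩ := hOrth p q ⟨j, hpj, A.compl_mem j q hqj, hpAj.le_compl_of_ne hqAj hpj hqj hpq⟩
  have hst := A.eq_sup_of_isLubA hpj hqj hpAj.1 ht1 hs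
  obtain ⟨w, htw, hrw, htr⟩ : A.gle (A.sup j p q) (A.compl r) := hst ▸ hs.2.2 _
    ⟨i, hpi, A.compl_mem i r hri, hpAi.le_compl_of_ne hrAi hpi hri fun h => hrj (h ▸ hpj)⟩
    ⟨k, hqk, A.compl_mem k r hrk, hqAk.le_compl_of_ne hrAk hqk hrk fun h => hqi (h ▸ hri)⟩
  have hwj : j ≠ w := fun h => hrj (A.compl_mem_iff.1 (h ▸ hrw))
  have hna : ¬ A.IsAtomIn j (A.sup j p q) := by
    intro h
    have htp : A.sup j p q = p := ((h.2 p hpj hpt).resolve_left hpAj.1).symm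
    exact hpq ((hpAj.2 q hqj (htp ▸ A.le_sup_right j p q hpj hqj)).resolve_left hqAj.1).symm
  have ht0 : A.sup j p q ≠ A.bot := fun h => hpAj.1 (A.eq_bot_of_le_bot hpj (h ▸ hpt))
  rcases (A.isCoatomIn_of_not_isAtomIn hwj ⟨htj, htw⟩ ht0 ht1 hna htw).2 _ hrw htr with h | h
  · exact hrAk.1 (A.compl_eq_top.1 h)
  · exact hrj (A.compl_mem_iff.1 (h ▸ htj))

end PastedFamily

/-- An atomic amalgam of Kleene lattices is a sharply paraorthomodular poset
(paraorthomodular and orthogonal) iff it contains no atomic loop of order 3. -/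
theorem stmt_13 {K ι : Type*} (A : PastedFamily K ι) :
    (A.ParaOM ∧ ∀ x y : K, A.gle x (A.compl y) → ∃ s, A.IsLubA x y s) ↔
      ¬ ∃ i j k : ι, A.AtomicLoop3 i j k := by
  refine ⟨fun ⟨_, hOrth⟩ ⟨_, _, _, hL⟩ => A.not_atomicLoop3_of_orthogonal hOrth hL,
    fun hnl => ⟨A.paraOM, ?_⟩⟩
  rintro x y ⟨i, hx, hy', hxy⟩
  exact ⟨_, A.isLubA_sup hnl hx (A.compl_mem_iff.1 hy') hxy⟩
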